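/- Let m ≥ 2, let Ω ⊂ ℝ^m be a bounded open set whose boundary Γ is d-summable for some m−1 < d < m, let 0 < α < 1, and let f : Ω → ℝ_{0,m} be a measurable function satisfying |f(x)| ≤ c·dist(x,Γ)^{α−1} for almost every x ∈ Ω, where c > 0 is a constant. Then ∫_Ω |f(x)|^p dx < ∞ for p = (m−d)/(1−α); i.e., f ∈ L^p(Ω, ℝ_{0,m}). -/

import Mathlib

/-!
Cut the region near `Γ = ∂Ω` into the dyadic shells `2^{-n-1} < dist(x, Γ) ≤ 2^{-n}`. The `n`-th
shell lies in the closed `2^{-n}`-neighbourhood of `Γ`, which is covered by `N_Γ(2^{-n})` balls of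
radius `2^{1-n}`, so it contributes at most a constant times `N_Γ(2^{-n}) 2^{-nd}` to
`∫_Ω dist(x, Γ)^{d-m}`. Since `N_Γ` is antitone, that term is dominated by the integral of
`N_Γ(τ) τ^{d-1}` over `(2^{-n-1}, 2^{-n}]`, and d-summability bounds the sum. The exponent `p` is
exactly the one for which `|f|^p ≤ c^p dist(x, Γ)^{d-m}`.
-/

open MeasureTheory Metric Filter

noncomputable section

/-- The negative-definite quadratic form `x ↦ -‖x‖²` on `ℝ^m`. -/
def Qneg (m : ℕ) : QuadraticForm ℝ (EuclideanSpace ℝ (Fin m)) :=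
  - LinearMap.BilinMap.toQuadraticMap (innerₗ (EuclideanSpace ℝ (Fin m)) : LinearMap.BilinForm ℝ (EuclideanSpace ℝ (Fin m)))

/-- The real Clifford algebra `ℝ_{0,m}`. -/
abbrev Cl (m : ℕ) := CliffordAlgebra (Qneg m)

/-- Embedding of a vector of `ℝ^m` into the Clifford algebra. -/
abbrev clv {m : ℕ} (v : EuclideanSpace ℝ (Fin m)) : Cl m := CliffordAlgebra.ι (Qneg m) v

/-- `x_ψ = Σ_i x_i ψ^i ∈ ℝ_{0,m}`. -/
def clPsi {m : ℕ} (ψ : Fin m → EuclideanSpace ℝ (Fin m)) (x : EuclideanSpace ℝ (Fin m)) : Cl m :=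
  clv (∑ i, x i • ψ i)

/-- Surface area of the unit sphere of ℝ^m. -/
def sigma (m : ℕ) : ℝ := m * (volume (ball (0 : EuclideanSpace ℝ (Fin m)) 1)).toReal

variable {m : ℕ} [NormedAddCommGroup (Cl m)] [NormedSpace ℝ (Cl m)]

/-- Partial derivative ∂u/∂x_i. -/
def pd (i : Fin m) (u : EuclideanSpace ℝ (Fin m) → Cl m) (x : EuclideanSpace ℝ (Fin m)) : Cl m :=
  fderiv ℝ u x (EuclideanSpace.single i 1)

/-- The generalized (ψ-)Dirac operator `ψ∂u = Σ_i ψ^i · ∂u/∂x_i`. -/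
def dirac (ψ : Fin m → EuclideanSpace ℝ (Fin m)) (u : EuclideanSpace ℝ (Fin m) → Cl m)
    (x : EuclideanSpace ℝ (Fin m)) : Cl m :=
  ∑ i, clv (ψ i) * pd i u x

/-- The componentwise Laplacian. -/
def lap (u : EuclideanSpace ℝ (Fin m) → Cl m) (x : EuclideanSpace ℝ (Fin m)) : Cl m :=
  ∑ i, pd i (pd i u) x

/-- The Cauchy kernel `K_ψ(x) = -x_ψ/(σ_m |x|^m)`. -/
def Kpsi (ψ : Fin m → EuclideanSpace ℝ (Fin m)) (x : EuclideanSpace ℝ (Fin m)) : Cl m :=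
  (-(sigma m * ‖x‖ ^ m)⁻¹) • clPsi ψ x

/-- The kernel `K_{φψ}`. -/
def Kphipsi (φ ψ : Fin m → EuclideanSpace ℝ (Fin m)) (x : EuclideanSpace ℝ (Fin m)) : Cl m :=
  (2 * sigma m * (2 - (m : ℝ)))⁻¹ •
    (((2 - (m : ℝ)) * ‖x‖ ^ (-(m : ℝ))) • (clPsi ψ x * clPsi φ x)
      + (‖x‖ ^ ((2 : ℝ) - m)) • ∑ i, clv (ψ i) * clv (φ i))

/-- The Teodorescu transform `T_ψ v`. -/
def Tpsi (ψ : Fin m → EuclideanSpace ℝ (Fin m)) (Ω : Set (EuclideanSpace ℝ (Fin m)))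
    (v : EuclideanSpace ℝ (Fin m) → Cl m) (x : EuclideanSpace ℝ (Fin m)) : Cl m :=
  - ∫ y in Ω, Kpsi ψ (y - x) * v y

/-- The second order Teodorescu transform `T_{φψ} v`. -/
def Tphipsi (φ ψ : Fin m → EuclideanSpace ℝ (Fin m)) (Ω : Set (EuclideanSpace ℝ (Fin m)))
    (v : EuclideanSpace ℝ (Fin m) → Cl m) (x : EuclideanSpace ℝ (Fin m)) : Cl m :=
  - ∫ y in Ω, Kphipsi φ ψ (y - x) * v y

/-- Minimal number of closed balls of radius τ needed to cover Γ. -/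
def coverNum {m : ℕ} (Γ : Set (EuclideanSpace ℝ (Fin m))) (τ : ℝ) : ℕ :=
  sInf {n : ℕ | ∃ s : Finset (EuclideanSpace ℝ (Fin m)), s.card = n ∧
    Γ ⊆ ⋃ c ∈ s, closedBall c τ}

/-- `Γ` is `d`-summable: `∫₀¹ N_Γ(τ) τ^{d-1} dτ` converges. -/
def dSummable {m : ℕ} (Γ : Set (EuclideanSpace ℝ (Fin m))) (d : ℝ) : Prop :=
  IntegrableOn (fun τ : ℝ => (coverNum Γ τ : ℝ) * τ ^ (d - 1)) (Set.Ioo 0 1)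

open Set
open scoped ENNReal

section Covering

variable {m : ℕ} {Γ : Set (EuclideanSpace ℝ (Fin m))}

theorem exists_finset_card_eq_coverNum (hΓ : IsCompact Γ) {τ : ℝ} (hτ : 0 < τ) :
    ∃ s : Finset (EuclideanSpace ℝ (Fin m)), s.card = coverNum Γ τ ∧
      Γ ⊆ ⋃ c ∈ s, closedBall c τ := by
  refine Nat.sInf_mem (s := {n | ∃ s : Finset _, s.card = n ∧ Γ ⊆ ⋃ c ∈ s, closedBall c τ}) ?_
  obtain ⟨t, -, ht, hcov⟩ := finite_cover_balls_of_compact hΓ hτ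
  refine ⟨ht.toFinset.card, ht.toFinset, rfl, ?_⟩
  simpa using hcov.trans (iUnion₂_mono fun c _ => ball_subset_closedBall)

theorem antitoneOn_coverNum (hΓ : IsCompact Γ) : AntitoneOn (coverNum Γ) (Ioi 0) := by
  intro τ hτ τ' _ hle
  obtain ⟨s, hcard, hcov⟩ := exists_finset_card_eq_coverNum hΓ hτ
  exact Nat.sInf_le
    ⟨s, hcard, hcov.trans (iUnion₂_mono fun c _ => closedBall_subset_closedBall hle)⟩

theorem volume_cthickening_le (hΓ : IsCompact Γ) {r : ℝ} (hr : 0 < r) :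
    volume (cthickening r Γ) ≤
      coverNum Γ r *
        (ENNReal.ofReal ((2 * r) ^ m) * volume (ball (0 : EuclideanSpace ℝ (Fin m)) 1)) := by
  obtain ⟨s, hcard, hcov⟩ := exists_finset_card_eq_coverNum hΓ hr
  have hsub : cthickening r Γ ⊆ ⋃ c ∈ s, closedBall c (2 * r) := by
    rw [hΓ.cthickening_eq_biUnion_closedBall hr.le]
    refine iUnion₂_subset fun y hy x hx => ?_
    obtain ⟨c, hc, hyc⟩ := mem_iUnion₂.mp (hcov hy)
    refine mem_iUnion₂.mpr ⟨c, hc, ?_⟩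
    rw [mem_closedBall] at *
    linarith [dist_triangle x y c]
  calc volume (cthickening r Γ) ≤ ∑ c ∈ s, volume (closedBall c (2 * r)) :=
        (measure_mono hsub).trans (measure_biUnion_finset_le s _)
    _ = _ := by
        simp [Measure.addHaar_closedBall volume _ (by positivity : 0 ≤ 2 * r), hcard]

end Covering

section Dyadic

theorem rpow_le_two_rpow_abs_mul_rpow {r τ : ℝ} (hr : 0 < r) (hτ : τ ∈ Icc (r / 2) r) (e : ℝ) :
    r ^ e ≤ 2 ^ |e| * τ ^ e := by
  have hτ0 : 0 < τ := by linarith [hτ.1]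
  rcases le_or_gt 0 e with he | he
  · calc r ^ e ≤ (2 * τ) ^ e := Real.rpow_le_rpow hr.le (by linarith [hτ.1]) he
      _ = 2 ^ |e| * τ ^ e := by rw [abs_of_nonneg he, Real.mul_rpow zero_le_two hτ0.le]
  · calc r ^ e ≤ τ ^ e := Real.rpow_le_rpow_of_nonpos hτ0 hτ.2 he.le
      _ ≤ 2 ^ |e| * τ ^ e :=
        le_mul_of_one_le_left (by positivity) (Real.one_le_rpow one_le_two (abs_nonneg e))

theorem div_two_rpow_sub_mul_two_mul_pow {r : ℝ} (hr : 0 < r) (d : ℝ) (m : ℕ) :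
    (r / 2) ^ (d - m) * (2 * r) ^ m = 2 ^ (2 * m - d) * r ^ d := by
  rw [← Real.rpow_natCast, Real.div_rpow hr.le zero_le_two, Real.mul_rpow zero_le_two hr.le,
    Real.rpow_sub hr, Real.rpow_sub two_pos, Real.rpow_sub two_pos, two_mul, Real.rpow_add two_pos]
  field_simp

variable {g : ℝ → ℝ≥0∞} (hg : AntitoneOn g (Ioi 0)) (d : ℝ)
include hg

theorem mul_rpow_le_lintegral_Ioc {r : ℝ} (hr : 0 < r) :
    g r * ENNReal.ofReal (r ^ d) ≤
      2 * ENNReal.ofReal (2 ^ |d - 1|) *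
        ∫⁻ τ in Ioc (r / 2) r, g τ * ENNReal.ofReal (τ ^ (d - 1)) := by
  have hsplit : ENNReal.ofReal (r ^ d) =
      2 * (ENNReal.ofReal (r ^ (d - 1)) * ENNReal.ofReal (r - r / 2)) := by
    rw [← ENNReal.ofReal_mul (by positivity), ← ENNReal.ofReal_ofNat 2,
      ← ENNReal.ofReal_mul zero_le_two, Real.rpow_sub_one hr.ne']
    congr 1
    field_simp
    ring
  have hpt : ∀ τ ∈ Ioc (r / 2) r, g r * ENNReal.ofReal (r ^ (d - 1)) ≤
      ENNReal.ofReal (2 ^ |d - 1|) * (g τ * ENNReal.ofReal (τ ^ (d - 1))) := by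
    intro τ hτ
    have hτ0 : 0 < τ := by linarith [hτ.1]
    rw [mul_left_comm, ← ENNReal.ofReal_mul (by positivity)]
    exact mul_le_mul' (hg hτ0 hr hτ.2)
      (ENNReal.ofReal_le_ofReal (rpow_le_two_rpow_abs_mul_rpow hr (Ioc_subset_Icc_self hτ) _))
  calc g r * ENNReal.ofReal (r ^ d)
      = 2 * ∫⁻ _ in Ioc (r / 2) r, g r * ENNReal.ofReal (r ^ (d - 1)) := by
        rw [setLIntegral_const, Real.volume_Ioc, hsplit]
        ring
    _ ≤ 2 * ∫⁻ τ in Ioc (r / 2) r,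
          ENNReal.ofReal (2 ^ |d - 1|) * (g τ * ENNReal.ofReal (τ ^ (d - 1))) := by
        gcongr 2 * ?_
        exact setLIntegral_mono' measurableSet_Ioc hpt
    _ = _ := by
        rw [lintegral_const_mul' _ _ ENNReal.ofReal_ne_top, mul_assoc]

theorem tsum_mul_rpow_le_lintegral :
    ∑' n : ℕ, g (2⁻¹ ^ n) * ENNReal.ofReal (((2 : ℝ)⁻¹ ^ n) ^ d) ≤
      2 * ENNReal.ofReal (2 ^ |d - 1|) * ∫⁻ τ in Ioc 0 1, g τ * ENNReal.ofReal (τ ^ (d - 1)) := by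
  set ρ : ℕ → ℝ := fun n => 2⁻¹ ^ n
  have hρ : Antitone ρ := fun i j h => pow_le_pow_of_le_one (by norm_num) (by norm_num) h
  have hdisj : Pairwise (Function.onFun Disjoint fun n => Ioc (ρ (n + 1)) (ρ n)) :=
    hρ.pairwise_disjoint_on_Ioc_succ
  have hsub : (⋃ n, Ioc (ρ (n + 1)) (ρ n)) ⊆ Ioc 0 1 :=
    iUnion_subset fun n => Ioc_subset_Ioc (by positivity) (pow_le_one₀ (by norm_num) (by norm_num))
  calc ∑' n, g (ρ n) * ENNReal.ofReal (ρ n ^ d)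
      ≤ ∑' n, 2 * ENNReal.ofReal (2 ^ |d - 1|) *
          ∫⁻ τ in Ioc (ρ (n + 1)) (ρ n), g τ * ENNReal.ofReal (τ ^ (d - 1)) := by
        refine ENNReal.tsum_le_tsum fun n => ?_
        convert mul_rpow_le_lintegral_Ioc hg d (r := ρ n) (by positivity) using 4
        simp only [ρ, pow_succ, div_eq_mul_inv]
    _ = 2 * ENNReal.ofReal (2 ^ |d - 1|) *
          ∫⁻ τ in ⋃ n, Ioc (ρ (n + 1)) (ρ n), g τ * ENNReal.ofReal (τ ^ (d - 1)) := by
        rw [ENNReal.tsum_mul_left, lintegral_iUnion (fun _ => measurableSet_Ioc) hdisj]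
    _ ≤ _ := by gcongr

end Dyadic

section DistanceIntegral

variable {m : ℕ} {Γ : Set (EuclideanSpace ℝ (Fin m))}

theorem ofReal_infDist_rpow_le_one_add_tsum {d : ℝ} (hd : d ≤ m) (x : EuclideanSpace ℝ (Fin m)) :
    ENNReal.ofReal (infDist x Γ ^ (d - m)) ≤
      1 + ∑' n : ℕ, (cthickening (2⁻¹ ^ n) Γ).indicator
        (fun _ => ENNReal.ofReal (((2 : ℝ)⁻¹ ^ n / 2) ^ (d - m))) x := by
  have hdm : d - m ≤ 0 := by linarith
  -- On `Γ`, and everywhere when `Γ = ∅`, the distance is `0` and `0 ^ (d - m)` is the junk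
  -- value `0` or `1`.
  by_cases hD : 0 < infDist x Γ ∧ infDist x Γ ≤ 1
  · obtain ⟨n, hlt, hle⟩ :=
      exists_nat_pow_near_of_lt_one hD.1 hD.2 (by norm_num : (0 : ℝ) < 2⁻¹) (by norm_num)
    have hne : Γ.Nonempty := by
      by_contra h
      simp [not_nonempty_iff_eq_empty.1 h] at hD
    have hx : x ∈ cthickening (2⁻¹ ^ n) Γ := by
      rwa [mem_cthickening_iff,
        ENNReal.le_ofReal_iff_toReal_le (infEDist_ne_top hne) (by positivity)]
    refine le_add_left (le_trans ?_ (ENNReal.le_tsum n))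
    rw [pow_succ, ← div_eq_mul_inv] at hlt
    rw [indicator_of_mem hx]
    exact ENNReal.ofReal_le_ofReal (Real.rpow_le_rpow_of_nonpos (by positivity) hlt.le hdm)
  · refine le_add_right (ENNReal.ofReal_le_one.2 ?_)
    rcases (infDist_nonneg (x := x) (s := Γ)).eq_or_lt with h0 | hpos
    · rw [← h0]
      exact Real.zero_rpow_le_one _
    · exact Real.rpow_le_one_of_one_le_of_nonpos (not_le.1 fun h => hD ⟨hpos, h⟩).le hdm

theorem integrableOn_infDist_rpow (hΓ : IsCompact Γ) {s : Set (EuclideanSpace ℝ (Fin m))}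
    (hs : Bornology.IsBounded s) {d : ℝ} (hd : d ≤ m) (hsum : dSummable Γ d) :
    IntegrableOn (fun x => infDist x Γ ^ (d - m)) s := by
  refine ⟨((continuous_infDist_pt Γ).measurable.pow_const _).aestronglyMeasurable, ?_⟩
  rw [hasFiniteIntegral_iff_ofReal (ae_of_all _ fun x => Real.rpow_nonneg infDist_nonneg _)]
  set ρ : ℕ → ℝ := fun n => 2⁻¹ ^ n
  set C := ENNReal.ofReal (2 ^ (2 * m - d)) * volume (ball (0 : EuclideanSpace ℝ (Fin m)) 1)
  have hN : ∫⁻ τ in Ioc 0 1, (coverNum Γ τ : ℝ≥0∞) * ENNReal.ofReal (τ ^ (d - 1)) < ⊤ := by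
    rw [← restrict_Ioo_eq_restrict_Ioc]
    convert hsum.lintegral_lt_top using 3
    rw [ENNReal.ofReal_mul (Nat.cast_nonneg _), ENNReal.ofReal_natCast]
  have hlayer : ∀ n, ENNReal.ofReal ((ρ n / 2) ^ (d - m)) * volume (cthickening (ρ n) Γ) ≤
      C * (coverNum Γ (ρ n) * ENNReal.ofReal (ρ n ^ d)) := by
    intro n
    have hρ : 0 < ρ n := by positivity
    calc ENNReal.ofReal ((ρ n / 2) ^ (d - m)) * volume (cthickening (ρ n) Γ)
        ≤ ENNReal.ofReal ((ρ n / 2) ^ (d - m)) * (coverNum Γ (ρ n) *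
            (ENNReal.ofReal ((2 * ρ n) ^ m) *
              volume (ball (0 : EuclideanSpace ℝ (Fin m)) 1))) := by
          gcongr
          exact volume_cthickening_le hΓ hρ
      _ = coverNum Γ (ρ n) * ENNReal.ofReal ((ρ n / 2) ^ (d - m) * (2 * ρ n) ^ m) *
            volume (ball (0 : EuclideanSpace ℝ (Fin m)) 1) := by
          rw [ENNReal.ofReal_mul (by positivity)]
          ring
      _ = C * (coverNum Γ (ρ n) * ENNReal.ofReal (ρ n ^ d)) := by
          rw [div_two_rpow_sub_mul_two_mul_pow hρ, ENNReal.ofReal_mul (by positivity)]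
          ring
  calc ∫⁻ x in s, ENNReal.ofReal (infDist x Γ ^ (d - m))
      ≤ ∫⁻ x in s, 1 + ∑' n, (cthickening (ρ n) Γ).indicator
          (fun _ => ENNReal.ofReal ((ρ n / 2) ^ (d - m))) x :=
        lintegral_mono fun x => ofReal_infDist_rpow_le_one_add_tsum hd x
    _ ≤ volume s +
          ∑' n, ENNReal.ofReal ((ρ n / 2) ^ (d - m)) * volume (cthickening (ρ n) Γ) := by
        rw [lintegral_add_left measurable_const, lintegral_tsum fun n =>
          (measurable_const.indicator isClosed_cthickening.measurableSet).aemeasurable]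
        simp only [lintegral_const, Measure.restrict_apply_univ, one_mul,
          lintegral_indicator_const isClosed_cthickening.measurableSet]
        gcongr
        exact Measure.restrict_le_self
    _ ≤ volume s + C * ∑' n, coverNum Γ (ρ n) * ENNReal.ofReal (ρ n ^ d) := by
        rw [← ENNReal.tsum_mul_left]
        exact add_le_add le_rfl (ENNReal.tsum_le_tsum hlayer)
    _ ≤ volume s + C * (2 * ENNReal.ofReal (2 ^ |d - 1|) *
          ∫⁻ τ in Ioc 0 1, (coverNum Γ τ : ℝ≥0∞) * ENNReal.ofReal (τ ^ (d - 1))) := by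
        refine add_le_add le_rfl (mul_le_mul' le_rfl ?_)
        exact tsum_mul_rpow_le_lintegral
          (Nat.mono_cast.comp_antitoneOn (antitoneOn_coverNum hΓ)) d
    _ < ⊤ := by
        have hs' : volume s < ⊤ := hs.measure_lt_top
        have hV : volume (ball (0 : EuclideanSpace ℝ (Fin m)) 1) < ⊤ := measure_ball_lt_top
        finiteness

end DistanceIntegral

theorem statement6_general (m : ℕ)
    [NormedAddCommGroup (Cl m)]
    (Ω : Set (EuclideanSpace ℝ (Fin m))) (hΩb : Bornology.IsBounded Ω)
    (d : ℝ) (hd2 : d < m)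
    (hsum : dSummable (frontier Ω) d)
    (α : ℝ) (hα1 : α < 1)
    (f : EuclideanSpace ℝ (Fin m) → Cl m)
    (hf : AEStronglyMeasurable f (volume.restrict Ω))
    (c : ℝ) (hc : 0 < c)
    (hbound : ∀ᵐ x ∂(volume.restrict Ω),
      ‖f x‖ ≤ c * infDist x (frontier Ω) ^ (α - 1)) :
    (∫⁻ x in Ω, ENNReal.ofReal (‖f x‖ ^ (((m : ℝ) - d) / (1 - α))) ∂volume) < ⊤
    ∧ MemLp f (ENNReal.ofReal (((m : ℝ) - d) / (1 - α))) (volume.restrict Ω) := by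
  set p : ℝ := ((m : ℝ) - d) / (1 - α)
  have hp : 0 < p := div_pos (by linarith) (by linarith)
  have hexp : (α - 1) * p = d - m := by
    simp only [p]
    field_simp [(by linarith : (1 : ℝ) - α ≠ 0)]
    ring
  have hΓ : IsCompact (frontier Ω) :=
    isCompact_of_isClosed_isBounded isClosed_frontier (hΩb.closure.subset frontier_subset_closure)
  have hfp : IntegrableOn (fun x => ‖f x‖ ^ p) Ω := by
    refine ((integrableOn_infDist_rpow hΓ hΩb hd2.le hsum).const_mul (c ^ p)).mono'
      (hf.norm.aemeasurable.pow_const p).aestronglyMeasurable ?_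
    filter_upwards [hbound] with x hx
    have hD := infDist_nonneg (x := x) (s := frontier Ω)
    calc ‖‖f x‖ ^ p‖ = ‖f x‖ ^ p := Real.norm_of_nonneg (by positivity)
      _ ≤ (c * infDist x (frontier Ω) ^ (α - 1)) ^ p := by gcongr
      _ = c ^ p * infDist x (frontier Ω) ^ (d - m) := by
        rw [Real.mul_rpow hc.le (by positivity), ← Real.rpow_mul hD, hexp]
  have hp' : ENNReal.ofReal p ≠ 0 := (ENNReal.ofReal_pos.2 hp).ne'
  refine ⟨hfp.lintegral_lt_top, (integrable_norm_rpow_iff hf hp' ENNReal.ofReal_ne_top).1 ?_⟩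
  rwa [ENNReal.toReal_ofReal hp.le]

/-- if Γ = ∂Ω is d-summable (m-1 < d < m) and |f(x)| ≤ c·dist(x,Γ)^{α-1}
a.e. on Ω, then ∫_Ω |f|^p < ∞ for p = (m-d)/(1-α), i.e. f ∈ L^p(Ω). -/
theorem statement6 (m : ℕ) (hm : 2 ≤ m)
    [NormedAddCommGroup (Cl m)] [NormedSpace ℝ (Cl m)]
    (Ω : Set (EuclideanSpace ℝ (Fin m))) (hΩo : IsOpen Ω) (hΩb : Bornology.IsBounded Ω)
    (d : ℝ) (hd1 : (m : ℝ) - 1 < d) (hd2 : d < m)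
    (hsum : dSummable (frontier Ω) d)
    (α : ℝ) (hα0 : 0 < α) (hα1 : α < 1)
    (f : EuclideanSpace ℝ (Fin m) → Cl m)
    (hf : AEStronglyMeasurable f (volume.restrict Ω))
    (c : ℝ) (hc : 0 < c)
    (hbound : ∀ᵐ x ∂(volume.restrict Ω),
      ‖f x‖ ≤ c * infDist x (frontier Ω) ^ (α - 1)) :
    (∫⁻ x in Ω, ENNReal.ofReal (‖f x‖ ^ (((m : ℝ) - d) / (1 - α))) ∂volume) < ⊤
    ∧ MemLp f (ENNReal.ofReal (((m : ℝ) - d) / (1 - α))) (volume.restrict Ω) :=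
  statement6_general m Ω hΩb d hd2 hsum α hα1 f hf c hc hbound
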